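/- arXiv:2006.10725 — 2 statements merged into one kernel-verified Lean document; each statement's English description precedes it below -/
import Mathlib

section
/- Let G be a group acting on groups A ⊆ B with A a G-stable normal subgroup and C = B/A the quotient with induced G-action. Let b : G → B be a 1-cocycle with image cocycle c : G → C. Then the map sending a 1-cocycle a : G → A twisted by b (i.e. with G-action g·x = b(g)(g x)b(g)^{-1} restricted to A) to the cocycle g ↦ a(g)b(g) induces a surjection from cohomology classes in H^1(G, {}_b A) onto the fiber of H^1(G,B) → H^1(G,C) over the class of c. -/
/-- Let `G` act on groups `B` and `C = B/A` (presented by an equivariant surjection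
`π : B → C` with kernel `A`), let `b : G → B` be a 1-cocycle with image cocycle
`c = π ∘ b : G → C`.  Then every cocycle `b' : G → B` whose class lies in the fiber of
`H¹(G,B) → H¹(G,C)` over the class of `c` (i.e. `π ∘ b'` is cohomologous to `c`) is
cohomologous in `B` to a cocycle of the form `g ↦ a(g)·b(g)`, where `a` is a 1-cocycle
for the twisted action `g·x = b(g)(g x)b(g)⁻¹` with values in `A = ker π`.  In other
words, `a ↦ [g ↦ a(g)b(g)]` induces a surjection from `H¹(G, {}_b A)` onto the fiber. -/
theorem stmt_6 (G B C : Type*) [Group G] [Group B] [Group C]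
    (actB : G →* MulAut B) (actC : G →* MulAut C)
    (π : B →* C) (hπ : Function.Surjective π)
    (hequiv : ∀ (g : G) (x : B), π (actB g x) = actC g (π x))
    (b : G → B) (hb : ∀ g h : G, b (g * h) = b g * actB g (b h)) :
    ∀ b' : G → B, (∀ g h : G, b' (g * h) = b' g * actB g (b' h)) →
      (∃ y : C, ∀ g : G, π (b' g) = y⁻¹ * π (b g) * actC g y) →
      ∃ a : G → B, (∀ g : G, a g ∈ π.ker) ∧
        (∀ g h : G, a (g * h) = a g * (b g * actB g (a h) * (b g)⁻¹)) ∧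
        ∃ x : B, ∀ g : G, b' g = x⁻¹ * (a g * b g) * actB g x := by
  rintro b' hb' ⟨y, hy⟩
  obtain ⟨x, hx⟩ := hπ y
  refine ⟨fun g => x * b' g * (actB g x)⁻¹ * (b g)⁻¹, fun g => ?_, fun g h => ?_, x, fun g => ?_⟩
  · simp only [MonoidHom.mem_ker, map_mul, map_inv, hequiv, hx, hy g]
    group
  · simp only [hb, hb', map_mul, map_inv, MulAut.mul_apply]
    group
  · group
end

section
/- Let U be a group with a bijective Lang map, i.e. the map L : U → U, L(g) = g^{-1}φ(g) is a bijection, where φ is a group endomorphism of U. Let P be a nonempty right U-torsor (a set with a free transitive right U-action) equipped with a map φ_P : P → P satisfying φ_P(p·u) = φ_P(p)·φ(u). Then P has a unique φ_P-fixed point. -/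
/-- If the Lang map `g ↦ g⁻¹φ(g)` of a group `U` is bijective, then any nonempty right
`U`-torsor `P` with a `φ`-semilinear self-map `φ_P` has a unique `φ_P`-fixed point. -/
theorem stmt_10 (U P : Type*) [Group U] [Nonempty P] (φ : U →* U)
    (hLang : Function.Bijective fun g : U => g⁻¹ * φ g)
    (act : P → U → P)
    (hact_one : ∀ p, act p 1 = p)
    (hact_mul : ∀ p u v, act p (u * v) = act (act p u) v)
    (hfree_trans : ∀ p q : P, ∃! u : U, act p u = q)
    (φP : P → P) (hsemi : ∀ p u, φP (act p u) = act (φP p) (φ u)) :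
    ∃! p : P, φP p = p := by
  obtain ⟨p₀⟩ := ‹Nonempty P›
  obtain ⟨u, hu, _⟩ := hfree_trans p₀ (φP p₀)
  obtain ⟨k, hk⟩ := hLang.surjective u
  simp only at hk
  have hfix : φP (act p₀ k⁻¹) = act p₀ k⁻¹ := by
    rw [hsemi, ← hu, ← hact_mul, ← hk, map_inv]
    congr 1
    group
  refine ⟨act p₀ k⁻¹, hfix, ?_⟩
  intro q hq
  obtain ⟨w, hw, hwu⟩ := hfree_trans (act p₀ k⁻¹) q
  have h1 : φ w = w := by
    have h2 : act (act p₀ k⁻¹) (φ w) = q := by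
      rw [← hfix, ← hsemi, hw, hq]
    exact hwu _ h2
  have h3 : w = 1 := hLang.injective (by simp [h1])
  rw [← hw, h3, hact_one]
end
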